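/- arXiv:2602.12926 — 2 statements merged into one kernel-verified Lean document; each statement's English description precedes it below -/
import Mathlib

section
/- Let G be a K_{t,t}-free simple graph, let P be a partition of V(G), and let S be the set of vertices contained in a part of P of size less than t², together with vertices that are t-complete to some part of P of size at least t². Then |S| < |P| · t². -/
open Finset

variable {V : Type*}

/-- `G` contains no `K_{t,t}` subgraph: there are no two disjoint vertex sets of size `t`
with all edges between them present. -/
def KttFree (t : ℕ) (G : SimpleGraph V) : Prop :=
  ¬ ∃ A B : Finset V, Disjoint A B ∧ A.card = t ∧ B.card = t ∧
      ∀ a ∈ A, ∀ b ∈ B, G.Adj a b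

/-- `v` is `t`-complete to `P`: it has fewer than `t` non-neighbors in `P`. -/
def tComplete (G : SimpleGraph V) (t : ℕ) (v : V) (P : Finset V) : Prop :=
  ((P : Set V) \ {u | G.Adj v u}).ncard < t

/-- `Sparsify G 𝒫 t`: vertices in a part of size `< t²`, or `t`-complete to a part of
size `≥ t²`. -/
def Sparsify [Fintype V] [DecidableEq V] (G : SimpleGraph V)
    (P : Finpartition (Finset.univ : Finset V)) (t : ℕ) : Set V :=
  {v | (∃ A ∈ P.parts, v ∈ A ∧ A.card < t ^ 2) ∨
       ∃ A ∈ P.parts, t ^ 2 ≤ A.card ∧ tComplete G t v A}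

/-! For a part `A` with `|A| ≥ t²`, any `t` vertices that are `t`-complete to `A` together miss
at most `t (t - 1)` vertices of `A`, so they have `t` common neighbours in `A`: a `K_{t,t}`.
Hence fewer than `t` vertices are `t`-complete to each large part, fewer than `t²` vertices of
`Sparsify` are charged to each part, and the bound follows by summing over the parts. -/

namespace KttFree

variable {G : SimpleGraph V} {t : ℕ}

theorem pos (hG : KttFree t G) : 0 < t := by
  refine Nat.pos_of_ne_zero fun ht => hG ⟨∅, ∅, disjoint_empty_left ∅, ?_, ?_, by simp⟩ <;>
    simp [ht]

end KttFree

theorem tComplete_iff_card_filter_not_adj (G : SimpleGraph V) [DecidableRel G.Adj] (t : ℕ)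
    (v : V) (A : Finset V) : tComplete G t v A ↔ #(A.filter (¬ G.Adj v ·)) < t := by
  rw [tComplete, ← Set.ncard_coe_finset, coe_filter]
  rfl

theorem card_le_card_filter_forall_adj_add_mul [DecidableEq V] (G : SimpleGraph V)
    [DecidableRel G.Adj] {W A : Finset V} {k : ℕ}
    (hW : ∀ v ∈ W, #(A.filter (¬ G.Adj v ·)) ≤ k) :
    #A ≤ #(A.filter fun b => ∀ v ∈ W, G.Adj v b) + #W * k := by
  have hmissed : A.filter (fun b => ¬ ∀ v ∈ W, G.Adj v b) ⊆
      W.biUnion fun v => A.filter (¬ G.Adj v ·) := by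
    intro b hb
    simp only [mem_filter, not_forall] at hb
    obtain ⟨hbA, v, hvW, hvb⟩ := hb
    exact mem_biUnion.2 ⟨v, hvW, mem_filter.2 ⟨hbA, hvb⟩⟩
  calc #A = #(A.filter fun b => ∀ v ∈ W, G.Adj v b) +
        #(A.filter fun b => ¬ ∀ v ∈ W, G.Adj v b) := (card_filter_add_card_filter_not _).symm
    _ ≤ _ := Nat.add_le_add_left
        ((card_le_card hmissed).trans (card_biUnion_le_card_mul _ _ _ hW)) _

theorem KttFree.card_lt_of_forall_tComplete {G : SimpleGraph V} {t : ℕ} (hG : KttFree t G)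
    {A W : Finset V} (hA : t ^ 2 ≤ #A) (hW : ∀ v ∈ W, tComplete G t v A) : #W < t := by
  classical
  by_contra! htW
  obtain ⟨W', hW'W, hW'⟩ := exists_subset_card_eq htW
  set N := A.filter fun b => ∀ v ∈ W', G.Adj v b
  have hN : t ≤ #N := by
    have hmiss : ∀ v ∈ W', #(A.filter (¬ G.Adj v ·)) ≤ t - 1 := fun v hv =>
      Nat.le_sub_one_of_lt ((tComplete_iff_card_filter_not_adj G t v A).1 (hW v (hW'W hv)))
    have := card_le_card_filter_forall_adj_add_mul G hmiss
    obtain ⟨s, rfl⟩ := Nat.exists_eq_add_one_of_ne_zero hG.pos.ne'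
    rw [hW', Nat.add_sub_cancel] at this
    nlinarith
  obtain ⟨B, hBN, hB⟩ := exists_subset_card_eq hN
  have hadj : ∀ a ∈ W', ∀ b ∈ B, G.Adj a b := fun a ha b hb => (mem_filter.1 (hBN hb)).2 a ha
  exact hG ⟨W', B, disjoint_left.2 fun a ha haB => G.irrefl (hadj a ha a haB), hW', hB, hadj⟩

/-- In a `K_{t,t}`-free graph, `|Sparsify(G, 𝒫, t)| < |𝒫| · t²`. -/
theorem stmt1 [Fintype V] [DecidableEq V] [Nonempty V] (t : ℕ) (G : SimpleGraph V)
    (hG : KttFree t G) (P : Finpartition (Finset.univ : Finset V)) :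
    (Sparsify G P t).ncard < P.parts.card * t ^ 2 := by
  classical
  set charged : Finset V → Finset V := fun A =>
    univ.filter fun v => v ∈ A ∧ #A < t ^ 2 ∨ t ^ 2 ≤ #A ∧ tComplete G t v A
  have hcover : Sparsify G P t ⊆ ↑(P.parts.biUnion charged) := by
    rintro v (⟨A, hA, hvA, hsmall⟩ | ⟨A, hA, hlarge, hv⟩) <;>
      simp only [coe_biUnion, Set.mem_iUnion, mem_coe, charged, mem_filter, mem_univ, true_and]
    exacts [⟨A, hA, .inl ⟨hvA, hsmall⟩⟩, ⟨A, hA, .inr ⟨hlarge, hv⟩⟩]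
  have hcharged : ∀ A ∈ P.parts, #(charged A) < t ^ 2 := by
    intro A _
    by_cases hsmall : #A < t ^ 2
    · refine (card_le_card fun v hv => ?_).trans_lt hsmall
      simp only [charged, mem_filter, mem_univ, true_and] at hv
      exact hv.elim And.left fun h => absurd h.1 (not_le.2 hsmall)
    · refine (hG.card_lt_of_forall_tComplete (not_lt.1 hsmall) fun v hv => ?_).trans_le
        (Nat.le_self_pow two_ne_zero t)
      simp only [charged, mem_filter, mem_univ, true_and, hsmall, and_false, false_or] at hv
      exact hv.2
  calc (Sparsify G P t).ncard ≤ #(P.parts.biUnion charged) := by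
        rw [← Set.ncard_coe_finset]; exact Set.ncard_le_ncard hcover
    _ ≤ ∑ A ∈ P.parts, #(charged A) := card_biUnion_le
    _ < ∑ _A ∈ P.parts, t ^ 2 :=
        sum_lt_sum_of_nonempty (P.parts_nonempty univ_nonempty.ne_empty) hcharged
    _ = P.parts.card * t ^ 2 := by rw [sum_const, smul_eq_mul]
end

section
/- Let G be a K_{t,t}-free simple graph and 𝒫 a partition of V(G). Then there exists a set S ⊆ V(G) with |S| ≤ |𝒫| · t² such that for every 𝒫-flip G' of G and all vertices u, v ∉ S, dist_{G\S}(u,v) ≥ (1/3)·dist_{G'}(u,v), i.e., 3·dist_{G\S}(u,v) ≥ dist_{G'}(u,v) whenever u and v are connected in G\S. -/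
open Finset

variable {V : Type*}

/-- `H` is a `𝒫`-flip of `G`: the adjacency of a pair of distinct vertices is complemented
iff the (unordered) pair of parts containing them is among the flipped pairs. -/
def IsPFlip [Fintype V] [DecidableEq V] (P : Finpartition (Finset.univ : Finset V))
    (G H : SimpleGraph V) : Prop :=
  ∃ f : Finset V → Finset V → Bool, (∀ A B, f A B = f B A) ∧
    ∀ u v : V, u ≠ v → ∀ A ∈ P.parts, ∀ B ∈ P.parts, u ∈ A → v ∈ B →
      (H.Adj u v ↔ Xor' (G.Adj u v) (f A B = true))

/-- `H` is a `k`-flip of `G`: a `𝒫`-flip for some partition with at most `k` parts. -/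
def IsKFlip [Fintype V] [DecidableEq V] (k : ℕ) (G H : SimpleGraph V) : Prop :=
  ∃ P : Finpartition (Finset.univ : Finset V), P.parts.card ≤ k ∧ IsPFlip P G H

/-- The graph obtained from `G` by deleting (isolating) the vertices of `S`. -/
def SimpleGraph.deleteSet (G : SimpleGraph V) (S : Set V) : SimpleGraph V where
  Adj u v := G.Adj u v ∧ u ∉ S ∧ v ∉ S
  symm := ⟨fun u v ⟨h, hu, hv⟩ => ⟨h.symm, hv, hu⟩⟩
  loopless := ⟨fun v h => G.loopless.irrefl v h.1⟩

/- A vertex `v` outside `S` that is not `t`-complete to its own part fails to be `t`-complete to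
every part `A` containing a vertex outside `S`, since `S` swallows every part of size at most `t²`
and all vertices `t`-complete to a larger part; `K_{t,t}`-freeness keeps the latter set smaller
than `t`. Now let `uv` be an edge of `G \ S` with `u ∈ A` and `v ∈ B`. If the pair `{A, B}` is
not flipped, `uv` survives in `G'`. Otherwise `G'` is the complement of `G` between `A` and `B`;
the non-neighbours `X` of `v` in `A` and `Y` of `u` in `B` number at least `t` each, so by
`K_{t,t}`-freeness some `x ∈ X` and `y ∈ Y` are non-adjacent in `G`, and `u y x v` is a walk of
length at most `3` in `G'`. -/

namespace SimpleGraph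

variable {G H : SimpleGraph V} {k : ℕ}

lemma edist_le_mul_length (h : ∀ a b, H.Adj a b → G.edist a b ≤ k) {u v : V}
    (p : H.Walk u v) : G.edist u v ≤ k * p.length := by
  induction p with
  | nil => simp
  | @cons a b c hab p ih =>
    calc G.edist a c ≤ G.edist a b + G.edist b c := G.edist_triangle
      _ ≤ k + k * p.length := add_le_add (h a b hab) ih
      _ = k * (p.cons hab).length := by push_cast [Walk.length_cons]; ring

lemma Reachable.reachable_and_dist_le_mul {u v : V} (hr : H.Reachable u v)
    (h : ∀ a b, H.Adj a b → G.edist a b ≤ k) :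
    G.Reachable u v ∧ G.dist u v ≤ k * H.dist u v := by
  obtain ⟨p, hp⟩ := hr.exists_walk_length_eq_dist
  have hle : G.edist u v ≤ (k * p.length : ℕ) := by exact_mod_cast edist_le_mul_length h p
  have hGr : G.Reachable u v :=
    reachable_of_edist_ne_top (ne_top_of_le_ne_top (ENat.natCast_ne_top _) hle)
  refine ⟨hGr, ?_⟩
  rw [← hp, ← Nat.cast_le (α := ℕ∞), hGr.coe_dist_eq_edist]
  exact hle

end SimpleGraph

section Sparsification

open scoped Classical

variable {t : ℕ} {G : SimpleGraph V}

lemma tComplete_iff_card_filter_lt {v : V} {A : Finset V} :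
    tComplete G t v A ↔ (A.filter fun u => ¬ G.Adj v u).card < t := by
  rw [tComplete, ← Set.ncard_coe_finset, coe_filter]
  rfl

lemma KttFree.exists_not_adj (hG : KttFree t G) {X Y : Finset V} (hX : t ≤ X.card)
    (hY : t ≤ Y.card) : ∃ x ∈ X, ∃ y ∈ Y, ¬ G.Adj x y := by
  by_contra! hall
  obtain ⟨X', hX'X, hX'⟩ := exists_subset_card_eq hX
  obtain ⟨Y', hY'Y, hY'⟩ := exists_subset_card_eq hY
  have hXY : Disjoint X Y := disjoint_left.2 fun z hzX hzY => G.irrefl (hall z hzX z hzY)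
  exact hG ⟨X', Y', hXY.mono hX'X hY'Y, hX', hY', fun x hx y hy => hall x (hX'X hx) y (hY'Y hy)⟩

/-- `t` vertices `t`-complete to `A` miss fewer than `t · t` vertices of `A` between them, so
`t` common neighbours remain. -/
lemma KttFree.card_filter_tComplete_lt [Fintype V] (hG : KttFree t G) {A : Finset V}
    (hA : t ^ 2 ≤ A.card) :
    (univ.filter fun v => tComplete G t v A).card < t := by
  by_contra! h
  obtain ⟨W, hW, hWcard⟩ := exists_subset_card_eq h
  set C := A.filter fun b => ∀ w ∈ W, G.Adj w b
  have hmissed : A \ C ⊆ W.biUnion fun w => A.filter fun b => ¬ G.Adj w b := by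
    intro b hb
    simp only [C, mem_sdiff, mem_filter, not_and, not_forall] at hb
    obtain ⟨w, hw, hwb⟩ := hb.2 hb.1
    exact mem_biUnion.2 ⟨w, hw, mem_filter.2 ⟨hb.1, hwb⟩⟩
  have hmissed_card : (A \ C).card ≤ t * (t - 1) := by
    refine (card_le_card hmissed).trans ?_
    refine hWcard ▸ card_biUnion_le_card_mul _ _ _ fun w hw => ?_
    have := tComplete_iff_card_filter_lt.1 (mem_filter.1 (hW hw)).2
    omega
  have hC : t ≤ C.card := by
    have hsq : t * (t - 1) + t = t ^ 2 := by cases t <;> simp [Nat.mul_succ, sq]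
    have := card_sdiff_add_card_eq_card (show C ⊆ A from filter_subset _ _)
    omega
  obtain ⟨w, hw, c, hc, hwc⟩ := hG.exists_not_adj hWcard.ge hC
  exact hwc ((mem_filter.1 hc).2 w hw)

variable [Fintype V] [DecidableEq V]

noncomputable def sparsifier (G : SimpleGraph V) (t : ℕ)
    (P : Finpartition (univ : Finset V)) : Finset V :=
  P.parts.biUnion fun A => if A.card ≤ t ^ 2 then A else univ.filter fun v => tComplete G t v A

lemma card_sparsifier_le (hG : KttFree t G) (P : Finpartition (univ : Finset V)) :
    (sparsifier G t P).card ≤ P.parts.card * t ^ 2 := by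
  refine card_biUnion_le_card_mul _ _ _ fun A _ => ?_
  split_ifs with hA
  · exact hA
  · exact (hG.card_filter_tComplete_lt (by omega)).le.trans (Nat.le_self_pow two_ne_zero t)

lemma not_tComplete_of_notMem_sparsifier {P : Finpartition (univ : Finset V)} {A : Finset V}
    (hA : A ∈ P.parts) {u v : V} (huA : u ∈ A) (hu : u ∉ sparsifier G t P)
    (hv : v ∉ sparsifier G t P) : ¬ tComplete G t v A := by
  have hbig : ¬ A.card ≤ t ^ 2 := fun h => hu (mem_biUnion.2 ⟨A, hA, by rwa [if_pos h]⟩)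
  exact fun hvA => hv <| mem_biUnion.2
    ⟨A, hA, by rw [if_neg hbig]; exact mem_filter.2 ⟨mem_univ v, hvA⟩⟩

variable {P : Finpartition (univ : Finset V)} {G' : SimpleGraph V}

lemma IsPFlip.edist_le_three_of_adj (hG : KttFree t G) (hflip : IsPFlip P G G')
    {A B : Finset V} (hA : A ∈ P.parts) (hB : B ∈ P.parts) {u v : V} (huA : u ∈ A)
    (hvB : v ∈ B) (huv : G.Adj u v) (hvA : ¬ tComplete G t v A) (huB : ¬ tComplete G t u B) :
    G'.edist u v ≤ 3 := by
  obtain ⟨f, hsymm, hf⟩ := hflip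
  by_cases hfAB : f A B = true
  swap
  · exact (G'.edist_eq_one_iff_adj.2 ((hf u v huv.ne A hA B hB huA hvB).2
      (Or.inl ⟨huv, hfAB⟩))).trans_le (by norm_num)
  have flipped : ∀ {C D : Finset V}, C ∈ P.parts → D ∈ P.parts → f C D = true →
      ∀ {a b : V}, a ∈ C → b ∈ D → ¬ G.Adj a b → G'.edist a b ≤ 1 := by
    intro C D hC hD hCD a b ha hb hab
    rcases eq_or_ne a b with rfl | hne
    · simp
    · exact G'.edist_le_one_iff_adj_or_eq.2 (Or.inl ((hf a b hne C hC D hD ha hb).2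
        (Or.inr ⟨hCD, hab⟩)))
  have hfBA : f B A = true := hsymm A B ▸ hfAB
  obtain ⟨x, hx, y, hy, hxy⟩ := hG.exists_not_adj
    (not_lt.1 (mt tComplete_iff_card_filter_lt.2 hvA))
    (not_lt.1 (mt tComplete_iff_card_filter_lt.2 huB))
  obtain ⟨hxA, hvx⟩ := mem_filter.1 hx
  obtain ⟨hyB, huy⟩ := mem_filter.1 hy
  calc G'.edist u v ≤ G'.edist u y + G'.edist y x + G'.edist x v :=
        (G'.edist_triangle (v := x)).trans (by gcongr; exact G'.edist_triangle)
    _ ≤ 1 + 1 + 1 := by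
        gcongr
        · exact flipped hA hB hfAB huA hyB huy
        · exact flipped hB hA hfBA hyB hxA fun h => hxy h.symm
        · exact flipped hA hB hfAB hxA hvB fun h => hvx h.symm
    _ = 3 := by norm_num

end Sparsification

/-- Flip sparsification lemma: for every `K_{t,t}`-free graph `G` and
partition `𝒫` there is a set `S` of at most `|𝒫| · t²` vertices such that for every
`𝒫`-flip `G'` of `G` and all `u, v ∉ S` that are connected in `G \ S`, the vertices are
reachable in `G'` and `dist_{G'}(u,v) ≤ 3 · dist_{G\S}(u,v)`. -/
theorem stmt4 [Fintype V] [DecidableEq V] (t : ℕ) (G : SimpleGraph V)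
    (hG : KttFree t G) (P : Finpartition (Finset.univ : Finset V)) :
    ∃ S : Finset V, S.card ≤ P.parts.card * t ^ 2 ∧
      ∀ G' : SimpleGraph V, IsPFlip P G G' →
        ∀ u v : V, u ∉ S → v ∉ S → (G.deleteSet ↑S).Reachable u v →
          G'.Reachable u v ∧ G'.dist u v ≤ 3 * (G.deleteSet ↑S).dist u v := by
  refine ⟨sparsifier G t P, card_sparsifier_le hG P, fun G' hflip u v _ _ hreach => ?_⟩
  refine hreach.reachable_and_dist_le_mul fun a b ⟨hab, ha, hb⟩ => ?_
  obtain ⟨A, hA, haA⟩ := P.exists_mem (mem_univ a)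
  obtain ⟨B, hB, hbB⟩ := P.exists_mem (mem_univ b)
  exact hflip.edist_le_three_of_adj hG hA hB haA hbB hab
    (not_tComplete_of_notMem_sparsifier hA haA ha hb)
    (not_tComplete_of_notMem_sparsifier hB hbB hb ha)
end
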